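/- arXiv:1001.1269 — 2 statements merged into one kernel-verified Lean document; each statement's English description precedes it below -/
import Mathlib

section
/- For every discrete gradient vector field V on a finite regular CW complex there exists an injective discrete Morse function whose gradient vector field is exactly V; in particular there exists a function g: Cells(K) → ℕ that is a linear extension of the partial order induced by V. -/
/-!
Cast to `ℝ`, any injective map `g : Cells → ℕ` that is strictly monotone for `≺_V` is a Morse
function with gradient `V`, and a finite strict order has such a linear extension. So everything
comes down to `≺_V` having no cycles. Take a cycle through a cell `τ₀` of maximal dimension among
the cells lying on cycles. No step of it can rise above `dim τ₀`, and two descents (each along a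
pair of `V`) cannot be consecutive, so the cycle alternates between dimensions `dim τ₀ - 1` and
`dim τ₀`: it is a closed V-path, which a gradient field does not have.
-/

open Classical

variable {Cell : Type}

/-- A discrete vector field: a set of pairs (σ,τ) with σ a facet of τ,
each cell occurring in at most one pair. -/
def IsVectorField (facet : Cell → Cell → Prop) (V : Set (Cell × Cell)) : Prop :=
  (∀ p ∈ V, facet p.1 p.2) ∧
  ∀ p ∈ V, ∀ q ∈ V, (p.1 = q.1 ∨ p.1 = q.2 ∨ p.2 = q.1 ∨ p.2 = q.2) → p = q

/-- The covering relation ←_V : `covRel facet V x y` means x ←_V y. -/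
def covRel (facet : Cell → Cell → Prop) (V : Set (Cell × Cell)) (x y : Cell) : Prop :=
  (facet x y ∧ (x, y) ∉ V) ∨ (y, x) ∈ V

/-- The strict partial order ≺_V induced by V: transitive closure of ←_V. -/
def indOrder (facet : Cell → Cell → Prop) (V : Set (Cell × Cell)) : Cell → Cell → Prop :=
  Relation.TransGen (covRel facet V)

/-- The reflexive closure ⪯_V of ≺_V. -/
def indOrderLe (facet : Cell → Cell → Prop) (V : Set (Cell × Cell)) : Cell → Cell → Prop :=
  Relation.ReflTransGen (covRel facet V)

/-- A V-path (σ₀,τ₀,σ₁,…,τ_{r-1},σ_r), encoded by its first cell σ₀ and the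
list of pairs (τ_i, σ_{i+1}). -/
def IsVPath (facet : Cell → Cell → Prop) (V : Set (Cell × Cell)) :
    Cell → List (Cell × Cell) → Prop
  | _, [] => True
  | σ, (τ, σ') :: rest => (σ, τ) ∈ V ∧ facet σ' τ ∧ (σ', τ) ∉ V ∧ IsVPath facet V σ' rest

/-- The last cell σ_r of a V-path. -/
def pathLast (σ : Cell) (l : List (Cell × Cell)) : Cell :=
  (l.getLast?.map Prod.snd).getD σ

/-- No nontrivial closed V-paths. -/
def NoClosedVPath (facet : Cell → Cell → Prop) (V : Set (Cell × Cell)) : Prop :=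
  ∀ σ (l : List (Cell × Cell)), IsVPath facet V σ l → l ≠ [] → pathLast σ l ≠ σ

/-- A discrete gradient vector field. -/
def IsGradient (facet : Cell → Cell → Prop) (V : Set (Cell × Cell)) : Prop :=
  IsVectorField facet V ∧ NoClosedVPath facet V

/-- A cell is critical if it belongs to no pair of V. -/
def IsCritical (V : Set (Cell × Cell)) (x : Cell) : Prop :=
  ∀ p ∈ V, p.1 ≠ x ∧ p.2 ≠ x

/-- f is a discrete Morse function with gradient vector field V. -/
def IsMorse (facet : Cell → Cell → Prop) (V : Set (Cell × Cell)) (f : Cell → ℝ) : Prop :=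
  ∀ σ τ, facet σ τ → (((σ, τ) ∉ V → f σ < f τ) ∧ ((σ, τ) ∈ V → f τ ≤ f σ))

/-- f is a discrete pseudo-Morse function consistent with V. -/
def IsPseudoMorse (facet : Cell → Cell → Prop) (V : Set (Cell × Cell)) (f : Cell → ℝ) : Prop :=
  ∀ σ τ, facet σ τ → (((σ, τ) ∉ V → f σ ≤ f τ) ∧ ((σ, τ) ∈ V → f τ ≤ f σ))

/-- The pairs (σ_i, τ_i) of a V-path given by σ₀ and l = [(τ₀,σ₁),…]. -/
def oldPairs (σ0 : Cell) (l : List (Cell × Cell)) : List (Cell × Cell) :=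
  List.zip (σ0 :: l.map Prod.snd) (l.map Prod.fst)

/-- The reversed pairs (σ_{i+1}, τ_i) of a V-path. -/
def newPairs (l : List (Cell × Cell)) : List (Cell × Cell) :=
  l.map (fun p => (p.2, p.1))

/-- Reversal of V along the V-path from σ₀ ∈ ∂ρ given by l (Forman cancelation). -/
def reverseField (V : Set (Cell × Cell)) (ρ σ0 : Cell) (l : List (Cell × Cell)) :
    Set (Cell × Cell) :=
  (V \ {p : Cell × Cell | p ∈ oldPairs σ0 l}) ∪ {p : Cell × Cell | p ∈ newPairs l} ∪ {(σ0, ρ)}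

/-- A combinatorial surface (closed): facets raise dimension by one, dimensions are ≤ 2,
every 1-cell has exactly two boundary 0-cells and is a facet of exactly two 2-cells. -/
def IsCombSurface (dim : Cell → ℕ) (facet : Cell → Cell → Prop) : Prop :=
  (∀ σ τ, facet σ τ → dim τ = dim σ + 1) ∧
  (∀ x, dim x ≤ 2) ∧
  (∀ τ, dim τ = 1 → ∃ a b, a ≠ b ∧ ∀ x, facet x τ ↔ (x = a ∨ x = b)) ∧
  (∀ τ, dim τ = 1 → ∃ A B, A ≠ B ∧ ∀ X, facet τ X ↔ (X = A ∨ X = B))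

def VPathStep (facet : Cell → Cell → Prop) (V : Set (Cell × Cell)) (σ σ' : Cell) : Prop :=
  ∃ τ, (σ, τ) ∈ V ∧ facet σ' τ ∧ (σ', τ) ∉ V

lemma pathLast_cons (σ : Cell) (p : Cell × Cell) (l : List (Cell × Cell)) :
    pathLast σ (p :: l) = pathLast p.2 l := by
  cases l with
  | nil => simp [pathLast]
  | cons q t => simp [pathLast, List.getLast?_eq_some_getLast]

lemma exists_isVPath_of_transGen {facet : Cell → Cell → Prop} {V : Set (Cell × Cell)}
    {σ σ' : Cell} (h : Relation.TransGen (VPathStep facet V) σ σ') :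
    ∃ l, IsVPath facet V σ l ∧ l ≠ [] ∧ pathLast σ l = σ' := by
  induction h using Relation.TransGen.head_induction_on with
  | single hstep =>
    obtain ⟨τ, hV, hfacet, hnV⟩ := hstep
    exact ⟨[(τ, σ')], ⟨hV, hfacet, hnV, trivial⟩, List.cons_ne_nil _ _, rfl⟩
  | @head σ₀ σ₁ hstep _ ih =>
    obtain ⟨τ, hV, hfacet, hnV⟩ := hstep
    obtain ⟨l, hl, -, hlast⟩ := ih
    exact ⟨(τ, σ₁) :: l, ⟨hV, hfacet, hnV, hl⟩, List.cons_ne_nil _ _,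
      by rw [pathLast_cons, hlast]⟩

lemma NoClosedVPath.not_transGen_vPathStep {facet : Cell → Cell → Prop}
    {V : Set (Cell × Cell)} (hV : NoClosedVPath facet V) (σ : Cell) :
    ¬ Relation.TransGen (VPathStep facet V) σ σ := fun h =>
  let ⟨l, hl, hne, hlast⟩ := exists_isVPath_of_transGen h
  hV σ l hl hne hlast

/- A `≺_V`-chain that never rises above `dim τ₀` cannot descend twice in a row (the middle cell
would lie in two pairs of `V`), so after the descent from `τ₀` to `c` it alternates between
`dim τ₀ - 1` and `dim τ₀`; read backwards it is a V-path ending at `c`. -/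
lemma alternates_of_le_dim {dim : Cell → ℕ} {facet : Cell → Cell → Prop}
    {V : Set (Cell × Cell)} {c τ₀ : Cell} (hdim : ∀ σ τ, facet σ τ → dim τ = dim σ + 1)
    (hVF : IsVectorField facet V) (hc : (c, τ₀) ∈ V)
    (hmax : ∀ w, indOrderLe facet V c w → indOrderLe facet V w τ₀ → dim w ≤ dim τ₀)
    {z : Cell} (hcz : indOrderLe facet V c z) (hzτ : indOrderLe facet V z τ₀) :
    (dim z + 1 = dim τ₀ ∧ (∃ τ, (z, τ) ∈ V) ∧ Relation.ReflTransGen (VPathStep facet V) z c) ∨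
    (dim z = dim τ₀ ∧ ∃ σ, Relation.ReflTransGen (VPathStep facet V) σ c ∧
      facet σ z ∧ (σ, z) ∉ V) := by
  induction hcz with
  | refl => exact Or.inl ⟨(hdim _ _ (hVF.1 _ hc)).symm, ⟨τ₀, hc⟩, .refl⟩
  | @tail y z hcy hyz ih =>
    have hz_le := hmax z (hcy.tail hyz) hzτ
    rcases ih (.head hyz hzτ) with ⟨hy_dim, ⟨τ, hyτ⟩, hyc⟩ | ⟨hy_dim, σ, hσc, hσy, hσy'⟩
    · rcases hyz with ⟨hyz, hyz'⟩ | hzy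
      · exact Or.inr ⟨by rw [hdim _ _ hyz, hy_dim], y, hyc, hyz, hyz'⟩
      · have hzy_eq : z = y := congrArg Prod.fst (hVF.2 _ hzy _ hyτ (by simp))
        subst hzy_eq
        have := hdim z z (hVF.1 _ hzy)
        omega
    · rcases hyz with ⟨hyz, -⟩ | hzy
      · have := hdim _ _ hyz
        omega
      · have := hdim z y (hVF.1 _ hzy)
        exact Or.inl ⟨by omega, ⟨y, hzy⟩, .head ⟨y, hzy, hσy, hσy'⟩ hσc⟩

lemma indOrder_irrefl [Fintype Cell] {dim : Cell → ℕ} {facet : Cell → Cell → Prop}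
    (hdim : ∀ σ τ, facet σ τ → dim τ = dim σ + 1)
    {V : Set (Cell × Cell)} (hV : IsGradient facet V) (x : Cell) :
    ¬ indOrder facet V x x := by
  intro hx
  obtain ⟨τ₀, hτ₀, hmax⟩ :=
    (Finset.univ.filter fun z => indOrder facet V z z).exists_max_image dim ⟨x, by simpa⟩
  obtain ⟨c, hτc, hcτ⟩ := Relation.TransGen.head'_iff.mp (Finset.mem_filter.mp hτ₀).2
  have hcycle : ∀ w, indOrderLe facet V c w → indOrderLe facet V w τ₀ → dim w ≤ dim τ₀ :=
    fun w hcw hwτ => hmax w <|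
      Finset.mem_filter.mpr ⟨Finset.mem_univ w, .trans_right hwτ (.head' hτc hcw)⟩
  have hc : (c, τ₀) ∈ V := by
    refine hτc.resolve_left fun ⟨hfacet, _⟩ => ?_
    have := hcycle c .refl hcτ
    have := hdim _ _ hfacet
    omega
  rcases alternates_of_le_dim hdim hV.1 hc hcycle hcτ .refl with ⟨h, -⟩ | ⟨-, σ, hσc, hσ, hσ'⟩
  · omega
  · exact hV.2.not_transGen_vPathStep c (.head' ⟨τ₀, hc, hσ, hσ'⟩ hσc)

lemma exists_injective_nat_of_isStrictOrder {α : Type*} [Fintype α] (r : α → α → Prop)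
    [IsStrictOrder α r] : ∃ g : α → ℕ, Function.Injective g ∧ ∀ x y, r x y → g x < g y := by
  let := partialOrderOfSO r
  let : Fintype (LinearExtension α) := inferInstanceAs (Fintype α)
  let e := (monoEquivOfFin (LinearExtension α) rfl).symm
  have hext : StrictMono (toLinearExtension : α → LinearExtension α) :=
    toLinearExtension.monotone.strictMono_of_injective fun _ _ h => h
  exact ⟨fun x => e (toLinearExtension x),
    Fin.val_injective.comp (e.injective.comp fun _ _ h => h),
    fun x y hxy => e.strictMono (hext hxy)⟩

lemma isMorse_of_indOrder_lt {facet : Cell → Cell → Prop} {V : Set (Cell × Cell)}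
    {f : Cell → ℝ} (hf : ∀ x y, indOrder facet V x y → f x < f y) : IsMorse facet V f :=
  fun _ _ hfacet =>
    ⟨fun hnV => hf _ _ (.single (Or.inl ⟨hfacet, hnV⟩)),
      fun hV => (hf _ _ (.single (Or.inr hV))).le⟩

/-- every gradient vector field is the gradient vector field of some
injective discrete Morse function; in particular there is g : Cells → ℕ which is a
linear extension of the induced partial order. -/
theorem stmt2 [Fintype Cell] (dim : Cell → ℕ) (facet : Cell → Cell → Prop)
    (hdim : ∀ σ τ, facet σ τ → dim τ = dim σ + 1)
    (V : Set (Cell × Cell)) (hV : IsGradient facet V) :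
    (∃ f : Cell → ℝ, Function.Injective f ∧ IsMorse facet V f) ∧
    (∃ g : Cell → ℕ, Function.Injective g ∧
      ∀ x y, indOrder facet V x y → g x < g y) := by
  have : IsStrictOrder Cell (indOrder facet V) :=
    { irrefl := indOrder_irrefl hdim hV, trans := fun _ _ _ => Relation.TransGen.trans }
  obtain ⟨g, hg, hgV⟩ := exists_injective_nat_of_isStrictOrder (indOrder facet V)
  exact ⟨⟨fun x => g x, Nat.cast_injective.comp hg,
    isMorse_of_indOrder_lt fun x y h => Nat.cast_lt.mpr (hgV x y h)⟩, g, hg, hgV⟩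
end

section
/- (Forman's cancelation theorem) Let V be a discrete gradient vector field on a finite regular CW complex, and let φ and ρ be critical cells of V such that there is exactly one V-path Γ from ∂ρ to φ. Then the vector field Ṽ obtained by reversing V along Γ (replacing the pairs (σ_i,τ_i) of Γ by (σ_{i+1},τ_i) for i<r and adding (σ₀,ρ)) is again a gradient vector field, and its critical cells are exactly the critical cells of V other than φ and ρ. -/
open Classical

variable {Cell : Type}

/-!
Write Γ = (σ₀, τ₀, …, σᵣ = φ). Every cell of Γ except φ lies in a pair (σᵢ, τᵢ) of V, and φ, ρ
are critical, so the pairs of V off Γ meet neither Γ nor ρ. The new pairs (σ₀, ρ), (σᵢ₊₁, τᵢ)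
are disjoint: the σᵢ are distinct since V has no closed paths, hence so are the τᵢ (each is
paired with its σᵢ), ρ is not a τᵢ, and dimensions separate the σᵢ from ρ and the τᵢ. So Ṽ is a
vector field whose paired cells are those of V together with φ and ρ.

For acyclicity let S be the set of cells with a V-path to φ; it contains Γ. A Ṽ-step out of a
cell off Γ is a V-step, so Ṽ-steps cannot enter S from outside, and a closed Ṽ-path lies in S.
Uniqueness of Γ says that the only Ṽ-step from σᵢ₊₁ into S goes to σᵢ and that there is none
from σ₀, so a closed Ṽ-path cannot meet Γ. Off Γ all its steps are V-steps, contradicting that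
V is gradient.
-/

open Relation

theorem Relation.TransGen.mono_of_invariant {α : Type*} {r r' : α → α → Prop} {p : α → Prop}
    (h : ∀ x y, p x → r x y → r' x y ∧ p y) {x y : α} (hx : p x) (hxy : TransGen r x y) :
    TransGen r' x y := by
  induction hxy using TransGen.head_induction_on with
  | single hxy => exact .single (h _ _ hx hxy).1
  | head hxz _ ih => exact .head (h _ _ hx hxz).1 (ih (h _ _ hx hxz).2)

theorem Relation.TransGen.mono_on_cycles {α : Type*} {r r' : α → α → Prop}
    (h : ∀ x y, TransGen r x x → r x y → r' x y) {x : α} (hx : TransGen r x x) :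
    TransGen r' x x := by
  suffices ∀ z y, TransGen r z y → ReflTransGen r y z → TransGen r' z y from
    this x x hx .refl
  intro z y hzy
  induction hzy using TransGen.head_induction_on with
  | single hzy => exact fun hyz => .single (h _ _ (.head' hzy hyz) hzy)
  | head hzc hcy ih =>
    intro hyz
    have hz : TransGen r _ _ := .head' hzc (hcy.to_reflTransGen.trans hyz)
    exact .head (h _ _ hz hzc) (ih (hyz.tail hzc))

theorem Relation.TransGen.exists_rel_transGen_self {α : Type*} {r : α → α → Prop} {x : α}
    (hx : TransGen r x x) : ∃ y, r x y ∧ TransGen r y y := by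
  obtain ⟨y, hxy, hyx⟩ := TransGen.head'_iff.1 hx
  exact ⟨y, hxy, .tail' hyx hxy⟩

section VPath

variable {facet : Cell → Cell → Prop} {W : Set (Cell × Cell)}

@[simp]
theorem pathLast_nil (σ : Cell) : pathLast σ [] = σ := rfl

@[simp]
theorem pathLast_cons_s7 (σ τ σ' : Cell) (m : List (Cell × Cell)) :
    pathLast σ ((τ, σ') :: m) = pathLast σ' m := by
  cases m with
  | nil => rfl
  | cons q m =>
    simp only [pathLast, List.getLast?_cons_cons,
      List.getLast?_eq_some_getLast (List.cons_ne_nil q m), Option.map_some, Option.getD_some]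

theorem pathLast_append (σ : Cell) (a b : List (Cell × Cell)) :
    pathLast σ (a ++ b) = pathLast (pathLast σ a) b := by
  induction a generalizing σ with
  | nil => rfl
  | cons p a ih =>
    obtain ⟨τ, σ'⟩ := p
    simp [ih]

@[simp]
theorem isVPath_cons {σ τ σ' : Cell} {m : List (Cell × Cell)} :
    IsVPath facet W σ ((τ, σ') :: m) ↔
      (σ, τ) ∈ W ∧ facet σ' τ ∧ (σ', τ) ∉ W ∧ IsVPath facet W σ' m :=
  Iff.rfl

theorem isVPath_append {σ : Cell} {a b : List (Cell × Cell)} :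
    IsVPath facet W σ (a ++ b) ↔ IsVPath facet W σ a ∧ IsVPath facet W (pathLast σ a) b := by
  induction a generalizing σ with
  | nil => simp [IsVPath]
  | cons p a ih =>
    obtain ⟨τ, σ'⟩ := p
    simp [ih, and_assoc]

@[simp]
theorem oldPairs_cons (σ τ σ' : Cell) (m : List (Cell × Cell)) :
    oldPairs σ ((τ, σ') :: m) = (σ, τ) :: oldPairs σ' m := rfl

theorem map_snd_oldPairs (σ : Cell) (m : List (Cell × Cell)) :
    (oldPairs σ m).map Prod.snd = m.map Prod.fst := by
  induction m generalizing σ with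
  | nil => rfl
  | cons p m ih =>
    obtain ⟨τ, σ'⟩ := p
    simp [ih]

theorem map_fst_oldPairs_append_pathLast (σ : Cell) (m : List (Cell × Cell)) :
    (oldPairs σ m).map Prod.fst ++ [pathLast σ m] = σ :: m.map Prod.snd := by
  induction m generalizing σ with
  | nil => rfl
  | cons p m ih =>
    obtain ⟨τ, σ'⟩ := p
    simp [ih]

theorem exists_mem_oldPairs_of_mem_map_fst {σ τ : Cell} {m : List (Cell × Cell)}
    (h : τ ∈ m.map Prod.fst) : ∃ x ∈ σ :: m.map Prod.snd, (x, τ) ∈ oldPairs σ m := by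
  induction m generalizing σ with
  | nil => simp at h
  | cons p m ih =>
    obtain ⟨τ', σ'⟩ := p
    rcases List.mem_cons.1 h with rfl | h
    · exact ⟨σ, by simp, by simp⟩
    · obtain ⟨x, hx, hxτ⟩ := ih (σ := σ') h
      exact ⟨x, List.mem_cons_of_mem _ hx, List.mem_cons_of_mem _ hxτ⟩

theorem IsVPath.mem_of_mem_oldPairs {σ : Cell} {m : List (Cell × Cell)}
    (h : IsVPath facet W σ m) {p : Cell × Cell} (hp : p ∈ oldPairs σ m) : p ∈ W := by
  induction m generalizing σ with
  | nil => simp [oldPairs] at hp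
  | cons q m ih =>
    obtain ⟨τ, σ'⟩ := q
    rcases List.mem_cons.1 hp with rfl | hp
    · exact h.1
    · exact ih h.2.2.2 hp

theorem IsVPath.dim_eq {dim : Cell → ℕ} (hdim : ∀ σ τ, facet σ τ → dim τ = dim σ + 1)
    (hW : ∀ p ∈ W, facet p.1 p.2) {σ : Cell} {m : List (Cell × Cell)}
    (h : IsVPath facet W σ m) : ∀ p ∈ m, dim p.1 = dim σ + 1 ∧ dim p.2 = dim σ := by
  induction m generalizing σ with
  | nil => simp
  | cons q m ih =>
    obtain ⟨τ, σ'⟩ := q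
    obtain ⟨hστ, hσ'τ, -, hm⟩ := h
    have hτ := hdim σ τ (hW _ hστ)
    have hσ' := hdim σ' τ hσ'τ
    intro p hp
    rcases List.mem_cons.1 hp with rfl | hp
    · exact ⟨hτ, by dsimp only; omega⟩
    · have := ih hm p hp
      omega

theorem IsVPath.facet_of_mem {σ t s : Cell} {m : List (Cell × Cell)}
    (h : IsVPath facet W σ m) (hts : (t, s) ∈ m) : facet s t := by
  induction m generalizing σ with
  | nil => simp at hts
  | cons q m ih =>
    obtain ⟨τ, σ'⟩ := q
    rcases List.mem_cons.1 hts with hts | hts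
    · obtain ⟨rfl, rfl⟩ := Prod.mk.inj hts
      exact h.2.1
    · exact ih h.2.2.2 hts

def VStep (facet : Cell → Cell → Prop) (W : Set (Cell × Cell)) (x y : Cell) : Prop :=
  ∃ τ, (x, τ) ∈ W ∧ facet y τ ∧ (y, τ) ∉ W

theorem IsVPath.reflTransGen_pathLast {σ x : Cell} {m : List (Cell × Cell)}
    (h : IsVPath facet W σ m) (hx : x ∈ σ :: m.map Prod.snd) :
    ReflTransGen (VStep facet W) x (pathLast σ m) := by
  induction m generalizing σ x with
  | nil =>
    obtain rfl : x = σ := List.mem_singleton.1 hx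
    exact .refl
  | cons q m ih =>
    obtain ⟨τ, σ'⟩ := q
    obtain ⟨hστ, hσ'τ, hσ'τW, hm⟩ := h
    rw [pathLast_cons_s7]
    rcases List.mem_cons.1 hx with rfl | hx
    · exact .head ⟨τ, hστ, hσ'τ, hσ'τW⟩ (ih hm List.mem_cons_self)
    · exact ih hm hx

theorem IsVPath.transGen_of_mem {σ t x : Cell} {m : List (Cell × Cell)}
    (h : IsVPath facet W σ m) (hx : (t, x) ∈ m) : TransGen (VStep facet W) σ x := by
  induction m generalizing σ with
  | nil => simp at hx
  | cons q m ih =>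
    obtain ⟨τ, σ'⟩ := q
    obtain ⟨hστ, hσ'τ, hσ'τW, hm⟩ := h
    rcases List.mem_cons.1 hx with hx | hx
    · obtain ⟨rfl, rfl⟩ := Prod.mk.inj hx
      exact .single ⟨t, hστ, hσ'τ, hσ'τW⟩
    · exact .head ⟨τ, hστ, hσ'τ, hσ'τW⟩ (ih hm hx)

theorem exists_isVPath_of_reflTransGen {x z : Cell} (h : ReflTransGen (VStep facet W) x z) :
    ∃ m, IsVPath facet W x m ∧ pathLast x m = z := by
  induction h using ReflTransGen.head_induction_on with
  | refl => exact ⟨[], trivial, rfl⟩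
  | head hxy _ ih =>
    obtain ⟨τ, hxτ, hyτ, hyτW⟩ := hxy
    obtain ⟨m, hm, rfl⟩ := ih
    exact ⟨(τ, _) :: m, ⟨hxτ, hyτ, hyτW, hm⟩, pathLast_cons_s7 ..⟩

theorem noClosedVPath_iff : NoClosedVPath facet W ↔ ∀ x, ¬ TransGen (VStep facet W) x x := by
  constructor
  · intro hW x hx
    obtain ⟨y, ⟨τ, hxτ, hyτ, hyτW⟩, hyx⟩ := TransGen.head'_iff.1 hx
    obtain ⟨m, hm, hmx⟩ := exists_isVPath_of_reflTransGen hyx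
    exact hW x ((τ, y) :: m) ⟨hxτ, hyτ, hyτW, hm⟩ (List.cons_ne_nil _ _)
      ((pathLast_cons_s7 ..).trans hmx)
  · rintro hW σ (_ | ⟨⟨τ, σ'⟩, m⟩) h hne hlast
    · exact hne rfl
    · obtain ⟨hστ, hσ'τ, hσ'τW, hm⟩ := h
      rw [pathLast_cons_s7] at hlast
      refine hW σ (.head' ⟨τ, hστ, hσ'τ, hσ'τW⟩ ?_)
      exact hlast ▸ hm.reflTransGen_pathLast List.mem_cons_self

theorem IsVPath.nodup (hW : ∀ x, ¬ TransGen (VStep facet W) x x) {σ : Cell}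
    {m : List (Cell × Cell)} (h : IsVPath facet W σ m) : (σ :: m.map Prod.snd).Nodup := by
  induction m generalizing σ with
  | nil => simp
  | cons q m ih =>
    obtain ⟨τ, σ'⟩ := q
    refine List.nodup_cons.2 ⟨fun hσ => ?_, ih h.2.2.2⟩
    obtain ⟨⟨t, s⟩, hts, rfl⟩ := List.mem_map.1 hσ
    exact hW _ (h.transGen_of_mem hts)

end VPath

section VectorField

variable {facet : Cell → Cell → Prop} {W W₁ W₂ : Set (Cell × Cell)}

def pairedCells (W : Set (Cell × Cell)) : Set Cell :=
  {x | ∃ p ∈ W, p.1 = x ∨ p.2 = x}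

theorem isCritical_iff_notMem_pairedCells {x : Cell} :
    IsCritical W x ↔ x ∉ pairedCells W := by
  simp [IsCritical, pairedCells, not_or]

theorem pairedCells_union : pairedCells (W₁ ∪ W₂) = pairedCells W₁ ∪ pairedCells W₂ := by
  ext x
  simp only [pairedCells, Set.mem_union, Set.mem_ofPred_eq, or_and_right, exists_or]

theorem pairedCells_mono (h : W₁ ⊆ W₂) : pairedCells W₁ ⊆ pairedCells W₂ :=
  fun _ ⟨p, hp, hx⟩ => ⟨p, h hp, hx⟩

theorem pairedCells_setOf_mem (P : List (Cell × Cell)) :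
    pairedCells {p | p ∈ P} = {x | x ∈ P.map Prod.fst ∨ x ∈ P.map Prod.snd} := by
  ext x
  simp only [pairedCells, Set.mem_ofPred_eq, List.mem_map, and_or_left, exists_or]

theorem IsVectorField.fst_eq (hW : IsVectorField facet W) {x y τ : Cell} (hx : (x, τ) ∈ W)
    (hy : (y, τ) ∈ W) : x = y :=
  (Prod.mk.inj (hW.2 _ hx _ hy (Or.inr (Or.inr (Or.inr rfl))))).1

theorem IsVectorField.snd_eq (hW : IsVectorField facet W) {x τ τ' : Cell} (hτ : (x, τ) ∈ W)
    (hτ' : (x, τ') ∈ W) : τ = τ' :=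
  (Prod.mk.inj (hW.2 _ hτ _ hτ' (Or.inl rfl))).2

theorem IsVectorField.mono (hW : IsVectorField facet W₂) (h : W₁ ⊆ W₂) :
    IsVectorField facet W₁ :=
  ⟨fun p hp => hW.1 p (h hp), fun p hp q hq => hW.2 p (h hp) q (h hq)⟩

theorem IsVectorField.union (h₁ : IsVectorField facet W₁) (h₂ : IsVectorField facet W₂)
    (h : Disjoint (pairedCells W₁) (pairedCells W₂)) : IsVectorField facet (W₁ ∪ W₂) := by
  have mixed : ∀ p ∈ W₁, ∀ q ∈ W₂, ¬ (p.1 = q.1 ∨ p.1 = q.2 ∨ p.2 = q.1 ∨ p.2 = q.2) := by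
    rintro p hp q hq (hpq | hpq | hpq | hpq)
    · exact Set.disjoint_left.1 h ⟨p, hp, .inl hpq⟩ ⟨q, hq, .inl rfl⟩
    · exact Set.disjoint_left.1 h ⟨p, hp, .inl hpq⟩ ⟨q, hq, .inr rfl⟩
    · exact Set.disjoint_left.1 h ⟨p, hp, .inr hpq⟩ ⟨q, hq, .inl rfl⟩
    · exact Set.disjoint_left.1 h ⟨p, hp, .inr hpq⟩ ⟨q, hq, .inr rfl⟩
  refine ⟨fun p hp => hp.elim (h₁.1 p) (h₂.1 p), ?_⟩
  rintro p (hp | hp) q (hq | hq) hpq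
  · exact h₁.2 p hp q hq hpq
  · exact absurd hpq (mixed p hp q hq)
  · exact absurd (by tauto) (mixed q hq p hp)
  · exact h₂.2 p hp q hq hpq

theorem isVectorField_setOf_mem {P : List (Cell × Cell)} (hf : ∀ p ∈ P, facet p.1 p.2)
    (hP : (P.map Prod.fst ++ P.map Prod.snd).Nodup) : IsVectorField facet {p | p ∈ P} := by
  obtain ⟨hfst, hsnd, hdisj⟩ := List.nodup_append.1 hP
  refine ⟨hf, fun p hp q hq hpq => ?_⟩
  rcases hpq with hpq | hpq | hpq | hpq
  · exact List.inj_on_of_nodup_map hfst hp hq hpq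
  · exact absurd hpq (hdisj _ (List.mem_map_of_mem hp) _ (List.mem_map_of_mem hq))
  · exact absurd hpq.symm (hdisj _ (List.mem_map_of_mem hq) _ (List.mem_map_of_mem hp))
  · exact List.inj_on_of_nodup_map hsnd hp hq hpq

theorem disjoint_pairedCells_diff (hW : IsVectorField facet W) (h : W₁ ⊆ W) :
    Disjoint (pairedCells (W \ W₁)) (pairedCells W₁) := by
  refine Set.disjoint_left.2 ?_
  rintro x ⟨p, ⟨hpW, hpW₁⟩, hpx⟩ ⟨q, hq, hqx⟩
  exact hpW₁ (hW.2 p hpW q (h hq) (by rcases hpx with rfl | rfl <;> tauto) ▸ hq)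

theorem IsVPath.nodup_map_fst (hW : IsVectorField facet W)
    (hacyc : ∀ x, ¬ TransGen (VStep facet W) x x) {σ : Cell} {m : List (Cell × Cell)}
    (h : IsVPath facet W σ m) : (m.map Prod.fst).Nodup := by
  induction m generalizing σ with
  | nil => simp
  | cons q m ih =>
    obtain ⟨τ, σ'⟩ := q
    refine List.nodup_cons.2 ⟨fun hτ => ?_, ih h.2.2.2⟩
    obtain ⟨x, hx, hxτ⟩ := exists_mem_oldPairs_of_mem_map_fst (σ := σ') hτ
    obtain rfl : x = σ := hW.fst_eq (h.2.2.2.mem_of_mem_oldPairs hxτ) h.1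
    exact (List.nodup_cons.1 (h.nodup hacyc)).1 (by simpa using hx)

end VectorField

section Cancellation

variable {facet : Cell → Cell → Prop} {V : Set (Cell × Cell)} {ρ σ₀ : Cell}
  {l : List (Cell × Cell)}

theorem reverseField_eq : reverseField V ρ σ₀ l =
    (V \ {p | p ∈ oldPairs σ₀ l}) ∪ {p | p ∈ (σ₀, ρ) :: newPairs l} := by
  ext p
  simp only [reverseField, Set.mem_union, Set.mem_singleton_iff, Set.mem_ofPred_eq,
    List.mem_cons]
  tauto

theorem map_fst_cons_newPairs :
    ((σ₀, ρ) :: newPairs l).map Prod.fst = σ₀ :: l.map Prod.snd := by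
  simp [newPairs]

theorem map_snd_cons_newPairs :
    ((σ₀, ρ) :: newPairs l).map Prod.snd = ρ :: l.map Prod.fst := by
  simp [newPairs]

theorem pairedCells_cons_newPairs :
    pairedCells {p | p ∈ (σ₀, ρ) :: newPairs l} =
      pairedCells {p | p ∈ oldPairs σ₀ l} ∪ {pathLast σ₀ l, ρ} := by
  rw [pairedCells_setOf_mem, pairedCells_setOf_mem, map_fst_cons_newPairs, map_snd_cons_newPairs,
    ← map_fst_oldPairs_append_pathLast, map_snd_oldPairs]
  ext x
  simp only [Set.mem_ofPred_eq, Set.mem_union, Set.mem_insert_iff, Set.mem_singleton_iff,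
    List.mem_append, List.mem_cons, List.not_mem_nil]
  tauto

theorem pairedCells_reverseField (hΓ : IsVPath facet V σ₀ l) :
    pairedCells (reverseField V ρ σ₀ l) = pairedCells V ∪ {pathLast σ₀ l, ρ} := by
  rw [reverseField_eq, pairedCells_union, pairedCells_cons_newPairs, ← Set.union_assoc,
    ← pairedCells_union, Set.sdiff_union_of_subset (t := {p | p ∈ oldPairs σ₀ l})
      fun _ => hΓ.mem_of_mem_oldPairs]

theorem IsVPath.nodup_snd_append_fst {dim : Cell → ℕ}
    (hdim : ∀ σ τ, facet σ τ → dim τ = dim σ + 1) (hV : IsGradient facet V)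
    (hρ : IsCritical V ρ) (hfρ : facet σ₀ ρ) (hΓ : IsVPath facet V σ₀ l) :
    (σ₀ :: l.map Prod.snd ++ ρ :: l.map Prod.fst).Nodup := by
  have hacyc := noClosedVPath_iff.1 hV.2
  have hρl : ρ ∉ l.map Prod.fst := fun hρl => by
    obtain ⟨x, -, hx⟩ := exists_mem_oldPairs_of_mem_map_fst (σ := σ₀) hρl
    exact (hρ _ (hΓ.mem_of_mem_oldPairs hx)).2 rfl
  have hdims := hΓ.dim_eq hdim hV.1.1
  have hlow : ∀ x ∈ σ₀ :: l.map Prod.snd, dim x = dim σ₀ := by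
    simp only [List.mem_cons, List.mem_map]
    rintro x (rfl | ⟨p, hp, rfl⟩)
    exacts [rfl, (hdims p hp).2]
  have hup : ∀ x ∈ ρ :: l.map Prod.fst, dim x = dim σ₀ + 1 := by
    simp only [List.mem_cons, List.mem_map]
    rintro x (rfl | ⟨p, hp, rfl⟩)
    exacts [hdim _ _ hfρ, (hdims p hp).1]
  refine List.nodup_append.2
    ⟨hΓ.nodup hacyc, List.nodup_cons.2 ⟨hρl, hΓ.nodup_map_fst hV.1 hacyc⟩, ?_⟩
  rintro x hx y hy rfl
  have := hlow x hx
  have := hup x hy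
  omega

theorem isVectorField_reverseField {dim : Cell → ℕ}
    (hdim : ∀ σ τ, facet σ τ → dim τ = dim σ + 1) (hV : IsGradient facet V)
    (hρ : IsCritical V ρ) (hφ : IsCritical V (pathLast σ₀ l)) (hfρ : facet σ₀ ρ)
    (hΓ : IsVPath facet V σ₀ l) : IsVectorField facet (reverseField V ρ σ₀ l) := by
  have hold : {p | p ∈ oldPairs σ₀ l} ⊆ V := fun _ => hΓ.mem_of_mem_oldPairs
  rw [reverseField_eq]
  refine (hV.1.mono Set.sdiff_subset).union (isVectorField_setOf_mem ?_ ?_) ?_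
  · rintro p (_ | ⟨_, hp⟩)
    · exact hfρ
    · obtain ⟨⟨t, s⟩, hts, rfl⟩ := List.mem_map.1 hp
      exact hΓ.facet_of_mem hts
  · rw [map_fst_cons_newPairs, map_snd_cons_newPairs]
    exact hΓ.nodup_snd_append_fst hdim hV hρ hfρ
  · rw [pairedCells_cons_newPairs]
    refine Set.disjoint_union_right.2 ⟨disjoint_pairedCells_diff hV.1 hold, ?_⟩
    refine Set.disjoint_left.2 fun x hx hxφρ => ?_
    have hxV := pairedCells_mono Set.sdiff_subset hx
    rcases hxφρ with rfl | rfl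
    exacts [isCritical_iff_notMem_pairedCells.1 hφ hxV,
      isCritical_iff_notMem_pairedCells.1 hρ hxV]

theorem mem_reverseField_of_mem {t s : Cell} (h : (t, s) ∈ l) : (s, t) ∈ reverseField V ρ σ₀ l :=
  .inl (.inr (List.mem_map.2 ⟨(t, s), h, rfl⟩))

theorem mk_mem_reverseField : (σ₀, ρ) ∈ reverseField V ρ σ₀ l :=
  .inr rfl

theorem mem_of_mem_reverseField {x τ : Cell} (h : (x, τ) ∈ reverseField V ρ σ₀ l)
    (hx : x ∉ σ₀ :: l.map Prod.snd) : (x, τ) ∈ V := by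
  rw [reverseField_eq] at h
  rcases h with h | h
  · exact h.1
  · exact absurd (map_fst_cons_newPairs (ρ := ρ) ▸ List.mem_map_of_mem (f := Prod.fst) h) hx

theorem VStep.of_reverseField (hV : IsVectorField facet V) {x y : Cell}
    (h : VStep facet (reverseField V ρ σ₀ l) x y) (hx : x ∉ σ₀ :: l.map Prod.snd) :
    VStep facet V x y := by
  obtain ⟨τ, hxτ, hyτ, hyτ'⟩ := h
  have hxτV := mem_of_mem_reverseField hxτ hx
  exact ⟨τ, hxτV, hyτ, fun hyτV => hyτ' (hV.fst_eq hyτV hxτV ▸ hxτ)⟩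

theorem not_reflTransGen_of_vStep_reverseField_start
    (hvf : IsVectorField facet (reverseField V ρ σ₀ l))
    (huniq : ∀ y, facet y ρ → ReflTransGen (VStep facet V) y (pathLast σ₀ l) → y = σ₀)
    {y : Cell} (h : VStep facet (reverseField V ρ σ₀ l) σ₀ y) :
    ¬ ReflTransGen (VStep facet V) y (pathLast σ₀ l) := by
  obtain ⟨τ, hτ, hyτ, hyτ'⟩ := h
  obtain rfl : τ = ρ := hvf.snd_eq hτ mk_mem_reverseField
  intro hy
  obtain rfl := huniq y hyτ hy
  exact hyτ' mk_mem_reverseField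

theorem eq_pathLast_of_vStep_reverseField (hV : IsVectorField facet V)
    (hvf : IsVectorField facet (reverseField V ρ σ₀ l)) (hΓ : IsVPath facet V σ₀ l)
    (huniq : ∀ m, IsVPath facet V σ₀ m → pathLast σ₀ m = pathLast σ₀ l → m = l)
    {a b : List (Cell × Cell)} {t s y : Cell} (hl : l = a ++ (t, s) :: b)
    (h : VStep facet (reverseField V ρ σ₀ l) s y)
    (hy : ReflTransGen (VStep facet V) y (pathLast σ₀ l)) : y = pathLast σ₀ a := by
  obtain ⟨τ, hτ, hyτ, hyτ'⟩ := h
  have hts : (t, s) ∈ l := by simp [hl]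
  obtain rfl : τ = t := hvf.snd_eq hτ (mem_reverseField_of_mem hts)
  obtain ⟨ha, hστ, -⟩ : IsVPath facet V σ₀ a ∧ (pathLast σ₀ a, τ) ∈ V ∧ _ :=
    isVPath_append.1 (hl ▸ hΓ)
  by_contra hne
  obtain ⟨m, hm, hml⟩ := exists_isVPath_of_reflTransGen hy
  have hyτV : (y, τ) ∉ V := fun hyτV => hne (hV.fst_eq hyτV hστ)
  have hpath := huniq (a ++ (τ, y) :: m) (isVPath_append.2 ⟨ha, hστ, hyτ, hyτV, hm⟩)
    (by rw [pathLast_append, pathLast_cons_s7, hml])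
  obtain ⟨rfl, -⟩ : y = s ∧ m = b := by simpa [hl] using hpath
  exact hyτ' (mem_reverseField_of_mem hts)

theorem reflTransGen_of_transGen_reverseField (hV : IsGradient facet V)
    (hΓ : IsVPath facet V σ₀ l) {x : Cell}
    (hx : TransGen (VStep facet (reverseField V ρ σ₀ l)) x x) :
    ReflTransGen (VStep facet V) x (pathLast σ₀ l) := by
  by_contra hxφ
  refine noClosedVPath_iff.1 hV.2 x (hx.mono_of_invariant
    (p := fun x => ¬ ReflTransGen (VStep facet V) x (pathLast σ₀ l)) (fun x y hxφ hxy => ?_) hxφ)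
  have hE := hxy.of_reverseField hV.1 fun hx => hxφ (hΓ.reflTransGen_pathLast hx)
  exact ⟨hE, fun hyφ => hxφ (.head hE hyφ)⟩

theorem not_transGen_reverseField_of_mem (hV : IsGradient facet V)
    (hvf : IsVectorField facet (reverseField V ρ σ₀ l)) (hfρ : facet σ₀ ρ)
    (hΓ : IsVPath facet V σ₀ l)
    (huniq : ∀ y m, facet y ρ → IsVPath facet V y m → pathLast y m = pathLast σ₀ l →
      y = σ₀ ∧ m = l)
    {x : Cell} (hx : x ∈ σ₀ :: l.map Prod.snd) :
    ¬ TransGen (VStep facet (reverseField V ρ σ₀ l)) x x := by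
  have hprefix : ∀ a b, l = a ++ b →
      ¬ TransGen (VStep facet (reverseField V ρ σ₀ l)) (pathLast σ₀ a) (pathLast σ₀ a) := by
    intro a
    induction a using List.reverseRecOn with
    | nil =>
      intro b _ hσ₀
      obtain ⟨y, hσ₀y, hy⟩ := hσ₀.exists_rel_transGen_self
      refine not_reflTransGen_of_vStep_reverseField_start hvf (fun y hyρ hy => ?_) hσ₀y
        (reflTransGen_of_transGen_reverseField hV hΓ hy)
      obtain ⟨m, hm, hml⟩ := exists_isVPath_of_reflTransGen hy
      exact (huniq y m hyρ hm hml).1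
    | append_singleton a q ih =>
      obtain ⟨t, s⟩ := q
      intro b hl hs
      rw [List.append_assoc, List.singleton_append] at hl
      rw [pathLast_append, pathLast_cons_s7, pathLast_nil] at hs
      obtain ⟨y, hsy, hy⟩ := hs.exists_rel_transGen_self
      have hya := eq_pathLast_of_vStep_reverseField hV.1 hvf hΓ
        (fun m hm hml => (huniq σ₀ m hfρ hm hml).2) hl hsy
        (reflTransGen_of_transGen_reverseField hV hΓ hy)
      exact ih _ hl (hya ▸ hy)
  rcases List.mem_cons.1 hx with rfl | hx
  · exact hprefix [] l rfl
  · obtain ⟨⟨t, s⟩, hts, rfl⟩ := List.mem_map.1 hx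
    obtain ⟨a, b, hl⟩ := List.append_of_mem hts
    simpa [pathLast_append] using hprefix (a ++ [(t, s)]) b (by simp [hl])

theorem noClosedVPath_reverseField (hV : IsGradient facet V)
    (hvf : IsVectorField facet (reverseField V ρ σ₀ l)) (hfρ : facet σ₀ ρ)
    (hΓ : IsVPath facet V σ₀ l)
    (huniq : ∀ y m, facet y ρ → IsVPath facet V y m → pathLast y m = pathLast σ₀ l →
      y = σ₀ ∧ m = l) :
    NoClosedVPath facet (reverseField V ρ σ₀ l) :=
  noClosedVPath_iff.2 fun x hx => noClosedVPath_iff.1 hV.2 x <| hx.mono_on_cycles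
    fun _ _ hx hxy => hxy.of_reverseField hV.1 fun hmem =>
      not_transGen_reverseField_of_mem hV hvf hfρ hΓ huniq hmem hx

end Cancellation

theorem stmt7_general (dim : Cell → ℕ) (facet : Cell → Cell → Prop)
    (hdim : ∀ σ τ, facet σ τ → dim τ = dim σ + 1)
    (V : Set (Cell × Cell)) (hV : IsGradient facet V)
    (φ ρ : Cell) (hφ : IsCritical V φ) (hρ : IsCritical V ρ)
    (σ0 : Cell) (l : List (Cell × Cell))
    (hΓ : facet σ0 ρ ∧ IsVPath facet V σ0 l ∧ pathLast σ0 l = φ)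
    (huniq : ∀ σ0' l', facet σ0' ρ → IsVPath facet V σ0' l' → pathLast σ0' l' = φ →
      σ0' = σ0 ∧ l' = l) :
    IsGradient facet (reverseField V ρ σ0 l) ∧
    ∀ x, IsCritical (reverseField V ρ σ0 l) x ↔ (IsCritical V x ∧ x ≠ φ ∧ x ≠ ρ) := by
  obtain ⟨hfρ, hΓ, rfl⟩ := hΓ
  have hvf := isVectorField_reverseField hdim hV hρ hφ hfρ hΓ
  refine ⟨⟨hvf, noClosedVPath_reverseField hV hvf hfρ hΓ huniq⟩, fun x => ?_⟩
  simp only [isCritical_iff_notMem_pairedCells, pairedCells_reverseField hΓ, Set.mem_union,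
    Set.mem_insert_iff, Set.mem_singleton_iff]
  tauto

/-- Forman's cancelation theorem: if φ and ρ are critical cells of a
gradient vector field V and there is exactly one V-path Γ from ∂ρ to φ, then the field
obtained by reversing V along Γ is again a gradient vector field whose critical cells
are exactly those of V other than φ and ρ. -/
theorem stmt7 [Fintype Cell] (dim : Cell → ℕ) (facet : Cell → Cell → Prop)
    (hdim : ∀ σ τ, facet σ τ → dim τ = dim σ + 1)
    (V : Set (Cell × Cell)) (hV : IsGradient facet V)
    (φ ρ : Cell) (hφ : IsCritical V φ) (hρ : IsCritical V ρ) (hne : φ ≠ ρ)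
    (σ0 : Cell) (l : List (Cell × Cell))
    (hΓ : facet σ0 ρ ∧ IsVPath facet V σ0 l ∧ pathLast σ0 l = φ)
    (huniq : ∀ σ0' l', facet σ0' ρ → IsVPath facet V σ0' l' → pathLast σ0' l' = φ →
      σ0' = σ0 ∧ l' = l) :
    IsGradient facet (reverseField V ρ σ0 l) ∧
    ∀ x, IsCritical (reverseField V ρ σ0 l) x ↔ (IsCritical V x ∧ x ≠ φ ∧ x ≠ ρ) :=
  stmt7_general dim facet hdim V hV φ ρ hφ hρ σ0 l hΓ huniq
end
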